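/- arXiv:1207.5098 — 2 statements merged into one kernel-verified Lean document; each statement's English description precedes it below -/
import Mathlib

section
/- Let P be a (k+1)-neighborly convex polytope of dimension 2k+2 that is not a simplex, and let v be a vertex of P. Then the convex hull Q of the vertices of P other than v is again a (2k+2)-dimensional (k+1)-neighborly polytope, and Q is simplicial. -/
/-! Common definitions: abstract simplicial complexes, geometric realization,
triangulated spheres/balls, singular homology, stackedness, shellability,
bistellar moves, polytopes, faces, visibility. -/

open Finset CategoryTheory

/-- An abstract simplicial complex on the vertex type `V`. -/
structure SCplx (V : Type) where
  faces : Set (Finset V)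
  empty_not_mem : ∅ ∉ faces
  down_closed : ∀ s ∈ faces, ∀ t ⊆ s, t ≠ ∅ → t ∈ faces

namespace SCplx

variable {V : Type}

/-- The vertex set of a simplicial complex. -/
def vertexSet (K : SCplx V) : Set V := {v | {v} ∈ K.faces}

/-- The geometric realization of `K`, as a subspace of `V → ℝ`. -/
def space (K : SCplx V) : Set (V → ℝ) :=
  {f | (∀ v, 0 ≤ f v) ∧ ∃ s ∈ K.faces, (∀ v, v ∉ s → f v = 0) ∧ ∑ v ∈ s, f v = 1}

/-- `K` is a triangulated `d`-sphere. -/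
def IsSphere (K : SCplx V) (d : ℕ) : Prop :=
  Nonempty (K.space ≃ₜ Metric.sphere (0 : EuclideanSpace ℝ (Fin (d + 1))) 1)

/-- `K` is a triangulated `d`-ball. -/
def IsBall (K : SCplx V) (d : ℕ) : Prop :=
  Nonempty (K.space ≃ₜ Metric.closedBall (0 : EuclideanSpace ℝ (Fin d)) 1)

/-- `K` is pure of dimension `d`. -/
def Pure (K : SCplx V) (d : ℕ) : Prop :=
  (∀ s ∈ K.faces, s.card ≤ d + 1) ∧ ∀ s ∈ K.faces, ∃ t ∈ K.faces, s ⊆ t ∧ t.card = d + 1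

/-- The faces of the boundary complex of a pure `d`-dimensional complex `K`:
faces lying in some `(d-1)`-face (a `d`-element set) which is contained in a
unique facet. -/
def bdryFaces (K : SCplx V) (d : ℕ) : Set (Finset V) :=
  {α | α ∈ K.faces ∧ ∃ τ ∈ K.faces, α ⊆ τ ∧ τ.card = d ∧
    ∃! σ, σ ∈ K.faces ∧ σ.card = d + 1 ∧ τ ⊆ σ}

/-- The boundary complex of a pure `d`-dimensional complex. -/
def bdry (K : SCplx V) (d : ℕ) : SCplx V where
  faces := K.bdryFaces d
  empty_not_mem h := K.empty_not_mem h.1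
  down_closed := by
    rintro s ⟨hs, τ, hτK, hsτ, hτ⟩ t hts ht
    exact ⟨K.down_closed s hs t hts ht, τ, hτK, hts.trans hsτ, hτ⟩

/-- A pure `D`-dimensional ball (or complex) is `k`-stacked if all its faces of
codimension `≥ k+1` (i.e. of cardinality `≤ D - k`) lie in its boundary. -/
def StackedBall (K : SCplx V) (k D : ℕ) : Prop :=
  K.Pure D ∧ ∀ α ∈ K.faces, α.card ≤ D - k → α ∈ K.bdryFaces D

/-- A triangulated `d`-sphere is `k`-stacked if it bounds a `k`-stacked
triangulated `(d+1)`-ball. -/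
def StackedSphere (S : SCplx V) (k d : ℕ) : Prop :=
  ∃ B : SCplx V, B.IsBall (d + 1) ∧ B.StackedBall k (d + 1) ∧ B.bdryFaces (d + 1) = S.faces

/-- `K` is `l`-neighborly: every `l` vertices of `K` span a face. -/
def Neighborly (K : SCplx V) (l : ℕ) : Prop :=
  ∀ s : Finset V, ↑s ⊆ K.vertexSet → s.card = l → s ∈ K.faces

variable [DecidableEq V]

/-- The link of a vertex. -/
def link (K : SCplx V) (v : V) : SCplx V where
  faces := {s | s ∈ K.faces ∧ v ∉ s ∧ insert v s ∈ K.faces}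
  empty_not_mem h := K.empty_not_mem h.1
  down_closed := by
    rintro s ⟨hs, hvs, hvs'⟩ t hts ht
    exact ⟨K.down_closed s hs t hts ht, fun h => hvs (hts h),
      K.down_closed _ hvs' _ (Finset.insert_subset_insert _ hts) (Finset.insert_ne_empty _ _)⟩

/-- The (closed) star of a vertex. -/
def star (K : SCplx V) (v : V) : SCplx V where
  faces := {s | s ∈ K.faces ∧ insert v s ∈ K.faces}
  empty_not_mem h := K.empty_not_mem h.1
  down_closed := by
    rintro s ⟨hs, hvs⟩ t hts ht
    exact ⟨K.down_closed s hs t hts ht,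
      K.down_closed _ hvs _ (Finset.insert_subset_insert _ hts) (Finset.insert_ne_empty _ _)⟩

/-- The antistar of a vertex: the faces not containing it. -/
def ast (K : SCplx V) (v : V) : SCplx V where
  faces := {s | s ∈ K.faces ∧ v ∉ s}
  empty_not_mem h := K.empty_not_mem h.1
  down_closed := by
    rintro s ⟨hs, hvs⟩ t hts ht
    exact ⟨K.down_closed s hs t hts ht, fun h => hvs (hts h)⟩

/-- A shelling of a pure `d`-dimensional complex: an ordering of the facets such
that each facet meets the union of the previous ones in a nonempty union of
`(d-1)`-faces of its boundary. -/
def Shellable (K : SCplx V) (d : ℕ) : Prop :=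
  K.Pure d ∧ ∃ L : List (Finset V), L.Nodup ∧
    (∀ s, s ∈ L ↔ s ∈ K.faces ∧ s.card = d + 1) ∧
    ∀ i : Fin L.length, 0 < i.1 →
      ∃ R : Set (Finset V), R.Nonempty ∧ (∀ τ ∈ R, τ ⊆ L.get i ∧ τ.card = d) ∧
        {σ : Finset V | σ.Nonempty ∧ σ ⊆ L.get i ∧ ∃ j : Fin L.length, j < i ∧ σ ⊆ L.get j}
          = {σ | σ.Nonempty ∧ ∃ τ ∈ R, σ ⊆ τ}

/-- `K'` is obtained from the triangulated `d`-manifold `K` by a bistellar move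
of index `i`: the subcomplex `α * ∂β` (where `lk(α) = ∂β`) is replaced by
`∂α * β`. -/
def BistellarMove (d i : ℕ) (K K' : SCplx V) : Prop :=
  ∃ α β : Finset V, α.card = i + 1 ∧ β.card = d + 1 - i ∧ Disjoint α β ∧
    α ∈ K.faces ∧ β ∉ K.faces ∧
    {γ | γ ∈ K.faces ∧ α ⊆ γ} = {γ | α ⊆ γ ∧ γ ⊆ α ∪ β ∧ ¬ β ⊆ γ} ∧
    K'.faces = (K.faces \ {γ | α ⊆ γ}) ∪
      {γ | γ.Nonempty ∧ γ ⊆ α ∪ β ∧ β ⊆ γ ∧ ¬ α ⊆ γ}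

/-- `K` is the boundary complex of a `(d+1)`-simplex (a `d`-sphere). -/
def IsSimplexBdry (K : SCplx V) (d : ℕ) : Prop :=
  ∃ s : Finset V, s.card = d + 2 ∧ K.faces = {t | t ≠ ∅ ∧ t ⊂ s}

/-- A `d`-sphere is `k`-stellated if it is obtained from the boundary complex of
a simplex by a finite sequence of bistellar moves of index `< k`. -/
def Stellated (S : SCplx V) (k d : ℕ) : Prop :=
  ∃ K₀ : SCplx V, K₀.IsSimplexBdry d ∧
    Relation.ReflTransGen (fun K K' => ∃ i < k, BistellarMove d i K K') K₀ S

/-- `K` triangulates a closed topological `d`-manifold. -/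
def IsClosedManifold (K : SCplx V) (d : ℕ) : Prop :=
  K.faces.Nonempty ∧ K.Pure d ∧ CompactSpace K.space ∧
    ∀ x : K.space, ∃ U : Set K.space, IsOpen U ∧ x ∈ U ∧
      Nonempty (U ≃ₜ EuclideanSpace ℝ (Fin d))

end SCplx

/-- The `n`-th singular homology group (with integer coefficients) of a
topological space. -/
noncomputable def singularHomology (X : TopCat) (n : ℕ) : AddCommGrpCat :=
  ((AlgebraicTopology.alternatingFaceMapComplex AddCommGrpCat).obj
    (((CategoryTheory.SimplicialObject.whiskering _ _).obj AddCommGrpCat.free).obj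
      (TopCat.toSSet.obj X))).homology n

/-- A space has the singular homology of the `d`-sphere, `d ≥ 1`. -/
def HomologyOfSphere (X : TopCat) (d : ℕ) : Prop :=
  ∀ n : ℕ, ((n = 0 ∨ n = d) → Nonempty (singularHomology X n ≅ AddCommGrpCat.of ℤ)) ∧
    (¬(n = 0 ∨ n = d) → CategoryTheory.Limits.IsZero (singularHomology X n))

/-- A space has the singular homology of a point. -/
def HomologyOfPoint (X : TopCat) : Prop :=
  ∀ n : ℕ, (n = 0 → Nonempty (singularHomology X n ≅ AddCommGrpCat.of ℤ)) ∧
    (n ≠ 0 → CategoryTheory.Limits.IsZero (singularHomology X n))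

namespace SCplx

variable {V : Type}

/-- A triangulated homology `d`-sphere. -/
def IsHomologySphere (K : SCplx V) (d : ℕ) : Prop :=
  K.Pure d ∧ HomologyOfSphere (TopCat.of K.space) d

/-- A triangulated homology `d`-ball. -/
def IsHomologyBall (K : SCplx V) (d : ℕ) : Prop :=
  K.Pure d ∧ HomologyOfPoint (TopCat.of K.space) ∧
    (K.bdry d).IsHomologySphere (d - 1)

/-- A homology `d`-sphere is `k`-stacked if it bounds a `k`-stacked homology
`(d+1)`-ball. -/
def StackedHomologySphere (S : SCplx V) (k d : ℕ) : Prop :=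
  ∃ B : SCplx V, B.IsHomologyBall (d + 1) ∧ B.StackedBall k (d + 1) ∧
    B.bdryFaces (d + 1) = S.faces

end SCplx

/-- `Finset.image` without a decidability assumption. -/
noncomputable def Finset.image' {α β : Type} (φ : α → β) (s : Finset α) : Finset β :=
  letI := Classical.decEq β
  s.image φ

section Polytopes

variable {n : ℕ}

/-- Euclidean `n`-space. -/
abbrev Euc (n : ℕ) := EuclideanSpace ℝ (Fin n)

/-- A (convex) polytope: the convex hull of a finite set. -/
def IsPolytope (P : Set (Euc n)) : Prop := ∃ A : Finset (Euc n), P = convexHull ℝ ↑A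

/-- The dimension of a polytope (or any set). -/
noncomputable def pdim (P : Set (Euc n)) : ℕ :=
  Module.finrank ℝ (affineSpan ℝ P).direction

/-- `F` is a facet of the polytope `P`: an exposed face of codimension one. -/
def IsFacetOf (P F : Set (Euc n)) : Prop :=
  IsExposed ℝ P F ∧ F.Nonempty ∧ pdim F + 1 = pdim P

/-- `F` is a (geometric) simplex. -/
def IsSimplexSet (F : Set (Euc n)) : Prop :=
  ∃ s : Finset (Euc n), AffineIndependent ℝ (fun x : (s : Set (Euc n)) => (x : Euc n)) ∧
    F = convexHull ℝ ↑s

/-- A simplicial polytope: all facets are simplices. -/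
def IsSimplicialPolytope (P : Set (Euc n)) : Prop :=
  IsPolytope P ∧ ∀ F, IsFacetOf P F → IsSimplexSet F

/-- A polytope is `l`-neighborly if every `l` of its vertices form the vertex
set of a proper face. -/
def PolyNeighborly (P : Set (Euc n)) (l : ℕ) : Prop :=
  ∀ s : Finset (Euc n), ↑s ⊆ Set.extremePoints ℝ P → s.card = l →
    ∃ F, IsExposed ℝ P F ∧ F ≠ P ∧ Set.extremePoints ℝ F = ↑s

/-- The facet `F` of `Q` is visible from the point `x`: for every `y ∈ F`, the
segment `[x, y]` meets `Q` only in `y`. -/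
def VisibleFrom (Q : Set (Euc n)) (x : Euc n) (F : Set (Euc n)) : Prop :=
  ∀ y ∈ F, segment ℝ x y ∩ Q = {y}

/-- The faces of the boundary complex of a simplicial polytope `P`: nonempty
finite sets of vertices of `P` contained in a common facet. -/
def bdryComplexFaces (P : Set (Euc n)) : Set (Finset (Euc n)) :=
  {s | s.Nonempty ∧ ↑s ⊆ Set.extremePoints ℝ P ∧ ∃ F, IsFacetOf P F ∧ (s : Set (Euc n)) ⊆ F}

/-- The faces of the subcomplex of the boundary of `P` generated by the facets
visible from `x`. -/
def visibleComplexFaces (P : Set (Euc n)) (x : Euc n) : Set (Finset (Euc n)) :=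
  {s | s.Nonempty ∧ ↑s ⊆ Set.extremePoints ℝ P ∧
    ∃ F, IsFacetOf P F ∧ VisibleFrom P x F ∧ (s : Set (Euc n)) ⊆ F}

/-- The faces of the subcomplex of the boundary of `P` generated by the facets
invisible from `x`. -/
def invisibleComplexFaces (P : Set (Euc n)) (x : Euc n) : Set (Finset (Euc n)) :=
  {s | s.Nonempty ∧ ↑s ⊆ Set.extremePoints ℝ P ∧
    ∃ F, IsFacetOf P F ∧ ¬ VisibleFrom P x F ∧ (s : Set (Euc n)) ⊆ F}

/-- `S` is a polytopal `d`-sphere: isomorphic to the boundary complex of a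
simplicial `(d+1)`-polytope. -/
def IsPolytopalSphere {V : Type} (S : SCplx V) (d : ℕ) : Prop :=
  ∃ (m : ℕ) (P : Set (Euc m)) (φ : V → Euc m), IsSimplicialPolytope P ∧ pdim P = d + 1 ∧
    Set.InjOn φ S.vertexSet ∧
    (∀ s : Finset V, s ∈ S.faces → s.image' φ ∈ bdryComplexFaces P) ∧
    (∀ t ∈ bdryComplexFaces P, ∃ s ∈ S.faces, s.image' φ = t)

end Polytopes

section AuxNP
variable {n : ℕ}

lemma aux_km {F : Set (Euc n)} (hc : IsCompact F) (hconv : Convex ℝ F)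
    (hfin : (F.extremePoints ℝ).Finite) : F = convexHull ℝ (F.extremePoints ℝ) := by
  have h := closure_convexHull_extremePoints hc hconv
  rw [IsClosed.closure_eq (hfin.isClosed_convexHull ℝ)] at h
  exact h.symm

lemma aux_restrict {A Q B : Set (Euc n)} (hexp : IsExposed ℝ A B) (hBQ : B ⊆ Q)
    (hQA : Q ⊆ A) : IsExposed ℝ Q B := by
  intro hne
  obtain ⟨l, hl⟩ := hexp hne
  obtain ⟨b, hb⟩ := hne
  have hbl : b ∈ {x ∈ A | ∀ y ∈ A, l y ≤ l x} := hl ▸ hb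
  refine ⟨l, ?_⟩
  ext x
  constructor
  · intro hx
    have hx' : x ∈ {x ∈ A | ∀ y ∈ A, l y ≤ l x} := hl ▸ hx
    exact ⟨hBQ hx, fun y hy => hx'.2 y (hQA hy)⟩
  · rintro ⟨hxQ, hx⟩
    rw [hl]
    exact ⟨hQA hxQ, fun y hy => le_trans (hbl.2 y hy) (hx b (hBQ hb))⟩

lemma aux_pdim_eq (A : Set (Euc n)) : pdim A = Module.finrank ℝ (vectorSpan ℝ A) := by
  unfold pdim; rw [direction_affineSpan]

lemma aux_pdim_hull (s : Set (Euc n)) : pdim (convexHull ℝ s) = pdim s := by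
  unfold pdim; rw [affineSpan_convexHull]

lemma aux_pdim_mono {A B : Set (Euc n)} (h : A ⊆ B) : pdim A ≤ pdim B := by
  rw [aux_pdim_eq, aux_pdim_eq]
  exact Submodule.finrank_mono (vectorSpan_mono ℝ h)

lemma aux_range_coe (s : Finset (Euc n)) :
    Set.range (fun x : ↥s => (x : Euc n)) = (↑s : Set (Euc n)) := by
  simp [Subtype.range_coe_subtype]

lemma aux_finrank_le_card (s : Finset (Euc n)) (hne : s.Nonempty) :
    Module.finrank ℝ (vectorSpan ℝ (↑s : Set (Euc n))) + 1 ≤ s.card := by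
  have hcard : Fintype.card ↥s = (s.card - 1) + 1 := by
    rw [Fintype.card_coe]; have := hne.card_pos; omega
  have h := finrank_vectorSpan_range_le ℝ (fun x : ↥s => (x : Euc n)) hcard
  rw [aux_range_coe] at h
  have := hne.card_pos
  omega

lemma aux_finrank_of_indep {s : Finset (Euc n)}
    (hi : AffineIndependent ℝ (fun x : ↥s => (x : Euc n))) (m : ℕ) (hc : s.card = m + 1) :
    Module.finrank ℝ (vectorSpan ℝ (↑s : Set (Euc n))) = m := by
  have hcard : Fintype.card ↥s = m + 1 := by rw [Fintype.card_coe]; exact hc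
  have h := hi.finrank_vectorSpan hcard
  rwa [aux_range_coe] at h

end AuxNP

/-- deleting a vertex from a `(k+1)`-neighborly `(2k+2)`-polytope which is
not a simplex yields a `(k+1)`-neighborly `(2k+2)`-polytope which is simplicial. -/
theorem delete_vertex_of_neighborly_polytope (k : ℕ) (P : Set (Euc (2 * k + 3)))
    (hP : IsPolytope P) (hdim : pdim P = 2 * k + 2) (hnb : PolyNeighborly P (k + 1))
    (hns : ¬ IsSimplexSet P) (v : Euc (2 * k + 3)) (hv : v ∈ Set.extremePoints ℝ P)
    (Q : Set (Euc (2 * k + 3)))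
    (hQ : Q = convexHull ℝ (Set.extremePoints ℝ P \ {v})) :
    IsPolytope Q ∧ pdim Q = 2 * k + 2 ∧ PolyNeighborly Q (k + 1) ∧
      IsSimplicialPolytope Q := by
  classical
  obtain ⟨A, hAP⟩ := hP
  have hPconv : Convex ℝ P := hAP ▸ convex_convexHull ℝ _
  have hPcomp : IsCompact P := hAP ▸ A.finite_toSet.isCompact_convexHull ℝ
  set VP := Set.extremePoints ℝ P with hVP
  have hVPsub : VP ⊆ P := extremePoints_subset
  have hVfin : VP.Finite := A.finite_toSet.subset (by rw [hVP, hAP]; exact extremePoints_convexHull_subset)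
  have hPKM : P = convexHull ℝ VP := aux_km hPcomp hPconv hVfin
  set VF : Finset (Euc (2*k+3)) := hVfin.toFinset with hVFdef
  have hVFcoe : (↑VF : Set (Euc (2*k+3))) = VP := hVfin.coe_toFinset
  have hspan : vectorSpan ℝ P = vectorSpan ℝ VP := by
    rw [← direction_affineSpan, ← direction_affineSpan, hPKM, affineSpan_convexHull]
  have hpdimVP : Module.finrank ℝ (vectorSpan ℝ VP) = 2*k+2 := by
    rw [← hspan, ← aux_pdim_eq]; exact hdim
  have hVFcard : 2*k+3 ≤ VF.card := by
    have hne : VF.Nonempty := ⟨v, hVfin.mem_toFinset.mpr hv⟩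
    have h := aux_finrank_le_card VF hne
    rw [hVFcoe, hpdimVP] at h
    omega
  -- every small vertex set spans an exposed face
  have face_small : ∀ j, ∀ s : Finset (Euc (2*k+3)), ↑s ⊆ VP → s.Nonempty →
      s.card + j = k + 1 →
      IsExposed ℝ P (convexHull ℝ (↑s : Set (Euc (2*k+3)))) ∧
        Set.extremePoints ℝ (convexHull ℝ (↑s : Set (Euc (2*k+3)))) = ↑s := by
    intro j
    induction j with
    | zero =>
      intro s hsub hne hcard
      obtain ⟨F, hFexp, -, hFext⟩ := hnb s hsub (by omega)
      have hFeq : F = convexHull ℝ (↑s : Set (Euc (2*k+3))) := by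
        have h := aux_km (hFexp.isCompact hPcomp) (hFexp.convex hPconv)
          (by rw [hFext]; exact s.finite_toSet)
        rwa [hFext] at h
      exact ⟨hFeq ▸ hFexp, hFeq ▸ hFext⟩
    | succ j ih =>
      intro s hsub hne hcard
      obtain ⟨w, hw, w', hw', hww⟩ := Finset.one_lt_card.mp (show 1 < (VF \ s).card by
        have h1 := Finset.le_card_sdiff s VF
        omega)
      rw [Finset.mem_sdiff] at hw hw'
      have hsub1 : (↑(insert w s) : Set (Euc (2*k+3))) ⊆ VP := by
        rw [Finset.coe_insert]
        exact Set.insert_subset (hVfin.mem_toFinset.mp hw.1) hsub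
      have hsub2 : (↑(insert w' s) : Set (Euc (2*k+3))) ⊆ VP := by
        rw [Finset.coe_insert]
        exact Set.insert_subset (hVfin.mem_toFinset.mp hw'.1) hsub
      have h1 := ih (insert w s) hsub1 (Finset.insert_nonempty _ _)
        (by rw [Finset.card_insert_of_notMem hw.2]; omega)
      have h2 := ih (insert w' s) hsub2 (Finset.insert_nonempty _ _)
        (by rw [Finset.card_insert_of_notMem hw'.2]; omega)
      set F := convexHull ℝ (↑(insert w s) : Set (Euc (2*k+3))) ∩
        convexHull ℝ (↑(insert w' s) : Set (Euc (2*k+3))) with hFdef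
      have hFexp : IsExposed ℝ P F := h1.1.inter h2.1
      have hext : Set.extremePoints ℝ F = ↑s := by
        apply Set.Subset.antisymm
        · intro x hx
          have hxP : x ∈ VP := hFexp.isExtreme.extremePoints_subset_extremePoints hx
          have hxF : x ∈ F := extremePoints_subset hx
          have hx1 := inter_extremePoints_subset_extremePoints_of_subset
            (convexHull_min (hsub1.trans hVPsub) hPconv) ⟨hxF.1, hxP⟩
          have hx2 := inter_extremePoints_subset_extremePoints_of_subset
            (convexHull_min (hsub2.trans hVPsub) hPconv) ⟨hxF.2, hxP⟩
          rw [h1.2] at hx1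
          rw [h2.2] at hx2
          rcases Finset.mem_insert.mp (Finset.mem_coe.mp hx1) with rfl | hxs
          · rcases Finset.mem_insert.mp (Finset.mem_coe.mp hx2) with h | hxs
            · exact absurd h hww
            · exact Finset.mem_coe.mpr hxs
          · exact Finset.mem_coe.mpr hxs
        · intro x hxs
          have hxF : x ∈ F := ⟨subset_convexHull ℝ _ (by
              rw [Finset.coe_insert]; exact Set.mem_insert_of_mem _ hxs),
            subset_convexHull ℝ _ (by
              rw [Finset.coe_insert]; exact Set.mem_insert_of_mem _ hxs)⟩
          exact inter_extremePoints_subset_extremePoints_of_subset hFexp.subset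
            ⟨hxF, hsub hxs⟩
      have hFeq : F = convexHull ℝ (↑s : Set (Euc (2*k+3))) := by
        have h := aux_km (hFexp.isCompact hPcomp) (hFexp.convex hPconv)
          (by rw [hext]; exact s.finite_toSet)
        rwa [hext] at h
      exact ⟨hFeq ▸ hFexp, hFeq ▸ hext⟩
  have face : ∀ s : Finset (Euc (2*k+3)), ↑s ⊆ VP → s.Nonempty → s.card ≤ k + 1 →
      IsExposed ℝ P (convexHull ℝ (↑s : Set (Euc (2*k+3)))) ∧
        Set.extremePoints ℝ (convexHull ℝ (↑s : Set (Euc (2*k+3)))) = ↑s :=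
    fun s h1 h2 h3 => face_small (k + 1 - s.card) s h1 h2 (by omega)
  -- no Radon point among vertices with a small part
  have noRadon : ∀ t1 t2 : Finset (Euc (2*k+3)), ↑t1 ⊆ VP → ↑t2 ⊆ VP → Disjoint t1 t2 →
      t1.card ≤ k + 1 → ∀ y, y ∈ convexHull ℝ (↑t1 : Set (Euc (2*k+3))) →
      y ∈ convexHull ℝ (↑t2 : Set (Euc (2*k+3))) → False := by
    intro t1 t2 h1 h2 hdisj hc1 y hy1 hy2
    have ht1ne : t1.Nonempty := by
      rcases t1.eq_empty_or_nonempty with h | h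
      · rw [h] at hy1; simp at hy1
      · exact h
    have ht2ne : t2.Nonempty := by
      rcases t2.eq_empty_or_nonempty with h | h
      · rw [h] at hy2; simp at hy2
      · exact h
    obtain ⟨hexp, hext⟩ := face t1 h1 ht1ne hc1
    obtain ⟨x0, hx0⟩ := ht1ne
    obtain ⟨l, hl⟩ := hexp ⟨x0, subset_convexHull ℝ _ (Finset.mem_coe.mpr hx0)⟩
    have hy1' : y ∈ {x ∈ P | ∀ z ∈ P, l z ≤ l x} := hl ▸ hy1
    have hkey : ∀ w ∈ t2, l w < l y := by
      intro w hwt2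
      have hwP : w ∈ P := hVPsub (h2 (Finset.mem_coe.mpr hwt2))
      have hwnot : w ∉ convexHull ℝ (↑t1 : Set (Euc (2*k+3))) := by
        intro hmem
        have hwe := inter_extremePoints_subset_extremePoints_of_subset
          (convexHull_min (h1.trans hVPsub) hPconv) ⟨hmem, h2 (Finset.mem_coe.mpr hwt2)⟩
        rw [hext] at hwe
        exact (Finset.disjoint_left.mp hdisj (Finset.mem_coe.mp hwe)) hwt2
      have h3 : ¬ ∀ z ∈ P, l z ≤ l w := by
        intro hall
        exact hwnot (hl ▸ Set.mem_sep hwP hall)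
      push_neg at h3
      obtain ⟨z, hzP, hz⟩ := h3
      exact lt_of_lt_of_le hz (hy1'.2 z hzP)
    obtain ⟨w0, hw0, hsup⟩ := Finset.exists_mem_eq_sup' ht2ne (fun w => l w)
    have hhalf : convexHull ℝ (↑t2 : Set (Euc (2*k+3))) ⊆
        {x | l x ≤ t2.sup' ht2ne (fun w => l w)} := by
      apply convexHull_min
      · intro x hx
        exact Finset.le_sup' (fun w => l w) (Finset.mem_coe.mp hx)
      · exact convex_halfSpace_le ⟨l.map_add, l.map_smul⟩ _
    have hfin := hhalf hy2
    rw [hsup] at hfin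
    exact absurd hfin (not_le.mpr (hkey w0 hw0))
  -- every small vertex set is affinely independent
  have mainIndep : ∀ s : Finset (Euc (2*k+3)), ↑s ⊆ VP → s.card ≤ 2*k + 3 →
      AffineIndependent ℝ (fun x : ↥s => (x : Euc (2*k+3))) := by
    intro s hsub hsc
    by_contra hdep
    obtain ⟨I, y, hy⟩ := Convex.radon_partition hdep
    set f := fun x : ↥s => (x : Euc (2*k+3)) with hf
    have hS1s : f '' I ⊆ (↑s : Set (Euc (2*k+3))) := by
      rintro x ⟨a, -, rfl⟩; exact a.2
    have hS2s : f '' Iᶜ ⊆ (↑s : Set (Euc (2*k+3))) := by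
      rintro x ⟨a, -, rfl⟩; exact a.2
    set T1 : Finset (Euc (2*k+3)) := s.filter (· ∈ f '' I) with hT1def
    set T2 : Finset (Euc (2*k+3)) := s.filter (· ∈ f '' Iᶜ) with hT2def
    have hT1 : (↑T1 : Set (Euc (2*k+3))) = f '' I := by
      ext x
      constructor
      · intro hx; exact (Finset.mem_filter.mp (Finset.mem_coe.mp hx)).2
      · intro hx; exact Finset.mem_coe.mpr (Finset.mem_filter.mpr ⟨hS1s hx, hx⟩)
    have hT2 : (↑T2 : Set (Euc (2*k+3))) = f '' Iᶜ := by
      ext x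
      constructor
      · intro hx; exact (Finset.mem_filter.mp (Finset.mem_coe.mp hx)).2
      · intro hx; exact Finset.mem_coe.mpr (Finset.mem_filter.mpr ⟨hS2s hx, hx⟩)
    have hnotboth : ∀ x, x ∈ f '' I → x ∈ f '' Iᶜ → False := by
      rintro x ⟨b, hbI, hb⟩ ⟨c, hcI, hc⟩
      have hbc : b = c := Subtype.val_injective (hb.trans hc.symm)
      exact hcI (hbc ▸ hbI)
    have hdisj : Disjoint T1 T2 := by
      rw [Finset.disjoint_left]
      intro a ha1 ha2
      exact hnotboth a (Finset.mem_filter.mp ha1).2 (Finset.mem_filter.mp ha2).2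
    have hcardsum : T1.card + T2.card = s.card := by
      have hT2' : T2 = s.filter (fun x => ¬ x ∈ f '' I) := by
        apply Finset.filter_congr
        intro x hx
        constructor
        · intro h hh; exact hnotboth x hh h
        · intro h
          rcases Classical.em ((⟨x, hx⟩ : ↥s) ∈ I) with hI | hI
          · exact absurd ⟨⟨x, hx⟩, hI, rfl⟩ h
          · exact ⟨⟨x, hx⟩, hI, rfl⟩
      rw [hT2']
      exact Finset.card_filter_add_card_filter_not _
    have hy1 : y ∈ convexHull ℝ (↑T1 : Set (Euc (2*k+3))) := by rw [hT1]; exact hy.1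
    have hy2 : y ∈ convexHull ℝ (↑T2 : Set (Euc (2*k+3))) := by rw [hT2]; exact hy.2
    have hT1sub : (↑T1 : Set (Euc (2*k+3))) ⊆ VP := by rw [hT1]; exact hS1s.trans hsub
    have hT2sub : (↑T2 : Set (Euc (2*k+3))) ⊆ VP := by rw [hT2]; exact hS2s.trans hsub
    rcases (show T1.card ≤ k + 1 ∨ T2.card ≤ k + 1 by omega) with h | h
    · exact noRadon T1 T2 hT1sub hT2sub hdisj h y hy1 hy2
    · exact noRadon T2 T1 hT2sub hT1sub hdisj.symm h y hy2 hy1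
  -- P has at least 2k+4 vertices
  have hVFbig : 2*k + 4 ≤ VF.card := by
    by_contra hlt
    push_neg at hlt
    apply hns
    refine ⟨VF, ?_, ?_⟩
    · exact mainIndep VF (by rw [hVFcoe]) (by omega)
    · rw [hPKM, hVFcoe]
  -- basic facts about Q
  have hQfin : (VP \ {v}).Finite := hVfin.diff
  have hQconv : Convex ℝ Q := hQ ▸ convex_convexHull ℝ _
  have hQcomp : IsCompact Q := hQ ▸ hQfin.isCompact_convexHull ℝ
  have hQpoly : IsPolytope Q := ⟨hQfin.toFinset, by rw [hQ, hQfin.coe_toFinset]⟩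
  have hQsubP : Q ⊆ P := by
    rw [hQ]; exact convexHull_min (Set.diff_subset.trans hVPsub) hPconv
  have hVQsubQ : VP \ {v} ⊆ Q := by rw [hQ]; exact subset_convexHull ℝ _
  have hEQ : Set.extremePoints ℝ Q ⊆ VP \ {v} := by
    rw [hQ]; exact extremePoints_convexHull_subset
  -- dimension of Q
  have hQle : pdim Q ≤ 2*k + 2 := hdim ▸ aux_pdim_mono hQsubP
  have hQge : 2*k + 2 ≤ pdim Q := by
    obtain ⟨u, husub, hucard⟩ := Finset.exists_subset_card_eq (s := VF.erase v) (n := 2*k + 3) (by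
      have hve : (VF.erase v).card + 1 = VF.card :=
        Finset.card_erase_add_one (show v ∈ VF from hVfin.mem_toFinset.mpr hv)
      omega)
    have huVP' : (↑u : Set (Euc (2*k+3))) ⊆ VP \ {v} := by
      intro x hx
      have hxe := husub (Finset.mem_coe.mp hx)
      rw [Finset.mem_erase] at hxe
      exact ⟨hVfin.mem_toFinset.mp hxe.2, hxe.1⟩
    have hindep := mainIndep u (huVP'.trans Set.diff_subset) (by omega)
    have hfr := aux_finrank_of_indep hindep (2*k + 2) (by omega)
    calc 2*k + 2 = Module.finrank ℝ (vectorSpan ℝ (↑u : Set (Euc (2*k+3)))) := hfr.symm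
      _ ≤ pdim Q := by
          rw [aux_pdim_eq]
          exact Submodule.finrank_mono (vectorSpan_mono ℝ (huVP'.trans hVQsubQ))
  have hQdim : pdim Q = 2*k + 2 := le_antisymm hQle hQge
  -- neighborliness of Q
  have hQnb : PolyNeighborly Q (k + 1) := by
    intro s hs hcard
    have hsVP' : (↑s : Set (Euc (2*k+3))) ⊆ VP \ {v} := hs.trans hEQ
    have hsVP : (↑s : Set (Euc (2*k+3))) ⊆ VP := hsVP'.trans Set.diff_subset
    have hsne : s.Nonempty := Finset.card_pos.mp (by omega)
    obtain ⟨hexp, hext⟩ := face s hsVP hsne (by omega)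
    have hFQ : convexHull ℝ (↑s : Set (Euc (2*k+3))) ⊆ Q :=
      convexHull_min (hsVP'.trans hVQsubQ) hQconv
    refine ⟨convexHull ℝ (↑s : Set (Euc (2*k+3))), aux_restrict hexp hFQ hQsubP, ?_, hext⟩
    intro hFeqQ
    have h1 : pdim Q ≤ k := by
      rw [← hFeqQ, aux_pdim_hull, aux_pdim_eq]
      have := aux_finrank_le_card s hsne
      omega
    omega
  -- simpliciality of Q
  have hQsimp : ∀ F, IsFacetOf Q F → IsSimplexSet F := by
    rintro F ⟨hFexp, hFne, hFdim⟩
    have hFdim' : pdim F = 2*k + 1 := by rw [hQdim] at hFdim; omega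
    have hFcomp : IsCompact F := hFexp.isCompact hQcomp
    have hFconv : Convex ℝ F := hFexp.convex hQconv
    have hFEP : Set.extremePoints ℝ F ⊆ VP := fun x hx =>
      (hEQ (hFexp.isExtreme.extremePoints_subset_extremePoints hx)).1
    have hFfin : (Set.extremePoints ℝ F).Finite := hVfin.subset hFEP
    have hsFcoe : (↑hFfin.toFinset : Set (Euc (2*k+3))) = Set.extremePoints ℝ F :=
      hFfin.coe_toFinset
    have hFeq : F = convexHull ℝ (↑hFfin.toFinset : Set (Euc (2*k+3))) := by
      rw [hsFcoe]; exact aux_km hFcomp hFconv hFfin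
    have hsFsub : (↑hFfin.toFinset : Set (Euc (2*k+3))) ⊆ VP := by
      rw [hsFcoe]; exact hFEP
    have hsFcard : hFfin.toFinset.card ≤ 2*k + 2 := by
      by_contra hbig
      push_neg at hbig
      obtain ⟨u, husub, hucard⟩ := Finset.exists_subset_card_eq (s := hFfin.toFinset) (n := 2*k + 3)
        (by omega)
      have huind := mainIndep u ((Finset.coe_subset.mpr husub).trans hsFsub) (by omega)
      have hfr := aux_finrank_of_indep huind (2*k + 2) (by omega)
      have hle : Module.finrank ℝ (vectorSpan ℝ (↑u : Set (Euc (2*k+3)))) ≤ pdim F := by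
        rw [aux_pdim_eq]
        refine Submodule.finrank_mono (vectorSpan_mono ℝ ?_)
        refine (Finset.coe_subset.mpr husub).trans ?_
        rw [hsFcoe]
        exact extremePoints_subset
      rw [hfr, hFdim'] at hle
      omega
    exact ⟨hFfin.toFinset, mainIndep hFfin.toFinset hsFsub (by omega), hFeq⟩
  exact ⟨hQpoly, hQdim, hQnb, hQpoly, hQsimp⟩
end

section
/- Let Q be a convex polytope in R^n, v a point outside Q, and y a point in the boundary of Q lying in the relative interior of the union of facets of Q visible from v. Then there exists w ∈ Q with y strictly between v and w and the open segment (y,w) contained in the interior of Q. -/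
/-! Common definitions: abstract simplicial complexes, geometric realization,
triangulated spheres/balls, singular homology, stackedness, shellability,
bistellar moves, polytopes, faces, visibility. -/

open Finset CategoryTheory

/-- Aux: moving from a point outside a closed set towards `c`, there is a first
contact point, which lies on the frontier. -/
lemma aux_crossing {E : Type*} [NormedAddCommGroup E] [NormedSpace ℝ E] {Q : Set E}
    (hQclosed : IsClosed Q) {w c : E} (hw : w ∉ Q) {s0 : ℝ} (hs0 : 0 < s0)
    (hs0Q : (1 - s0) • w + s0 • c ∈ Q) :
    ∃ s1 : ℝ, 0 < s1 ∧ s1 ≤ s0 ∧ (1 - s1) • w + s1 • c ∈ frontier Q := by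
  set f : ℝ → E := fun s => (1 - s) • w + s • c with hfdef
  have hf : Continuous f := by
    apply Continuous.add
    · exact (continuous_const.sub continuous_id).smul continuous_const
    · exact continuous_id.smul continuous_const
  set S : Set ℝ := Set.Icc (0:ℝ) s0 ∩ f ⁻¹' Q with hSdef
  have hSclosed : IsClosed S := isClosed_Icc.inter (hQclosed.preimage hf)
  have hs0S : s0 ∈ S := ⟨⟨hs0.le, le_refl _⟩, hs0Q⟩
  have hSbdd : BddBelow S := ⟨0, fun s hs => hs.1.1⟩
  set s1 : ℝ := sInf S with hs1def
  have hs1S : s1 ∈ S := hSclosed.csInf_mem ⟨s0, hs0S⟩ hSbdd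
  have hs1le : s1 ≤ s0 := csInf_le hSbdd hs0S
  have hs1Q : f s1 ∈ Q := hs1S.2
  have hs1pos : 0 < s1 := by
    rcases eq_or_lt_of_le hs1S.1.1 with h | h
    · exfalso
      apply hw
      have hf0 : f s1 = w := by rw [← h]; simp [hfdef]
      rwa [hf0] at hs1Q
    · exact h
  refine ⟨s1, hs1pos, hs1le, subset_closure hs1Q, ?_⟩
  intro hzint
  have hs1pre : s1 ∈ f ⁻¹' interior Q := hzint
  obtain ⟨r, hr, hrp⟩ := Metric.isOpen_iff.mp (isOpen_interior.preimage hf) s1 hs1pre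
  set s' : ℝ := s1 - min s1 r / 2 with hs'def
  have hmin : 0 < min s1 r := lt_min hs1pos hr
  have hminle : min s1 r ≤ s1 := min_le_left _ _
  have hminr : min s1 r ≤ r := min_le_right _ _
  have hs'lt : s' < s1 := by simp only [hs'def]; linarith
  have hs'nonneg : 0 ≤ s' := by simp only [hs'def]; linarith
  have hs'ball : s' ∈ Metric.ball s1 r := by
    rw [Metric.mem_ball, Real.dist_eq, hs'def]
    rw [abs_of_nonpos (by linarith)]
    linarith
  have hs'S : s' ∈ S := by
    refine ⟨⟨hs'nonneg, le_trans hs'lt.le hs1le⟩, ?_⟩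
    show f s' ∈ Q
    exact interior_subset (hrp hs'ball)
  exact absurd (csInf_le hSbdd hs'S) (not_le.mpr hs'lt)

/-- Aux: an exposed face containing a strict convex combination of a point of `Q`
and the centroid of `A` (where `Q = conv A`) must be all of `Q`. -/
lemma aux_exposed_full {E : Type*} [NormedAddCommGroup E] [NormedSpace ℝ E]
    {Q F : Set E} {A : Finset E} (hA : Q = convexHull ℝ ↑A) (hAne : A.Nonempty)
    (hF : IsExposed ℝ Q F) (hFne : F.Nonempty)
    {y : E} (hyQ : y ∈ Q) {ε : ℝ} (hε : 0 < ε) (hε1 : ε < 1)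
    (hzF : (1 - ε) • y + ε • ((A.card : ℝ)⁻¹ • ∑ a ∈ A, a) ∈ F) : F = Q := by
  have hcard : (0:ℝ) < A.card := by exact_mod_cast hAne.card_pos
  set b : E := (A.card : ℝ)⁻¹ • ∑ a ∈ A, a with hbdef
  have hbQ : b ∈ Q := by
    rw [hA]
    have h1 := A.centerMass_mem_convexHull (w := fun _ => (1:ℝ))
      (fun _ _ => zero_le_one) (by simpa using hcard)
      (z := id) (fun a ha => Finset.mem_coe.mpr ha)
    simpa [Finset.centerMass, hbdef] using h1
  set z : E := (1 - ε) • y + ε • b with hzdef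
  have hQconv : Convex ℝ Q := hA ▸ convex_convexHull ℝ _
  have hzQ : z ∈ Q := hQconv hyQ hbQ (by linarith) hε.le (by ring)
  obtain ⟨l, hl⟩ := hF hFne
  rw [hl] at hzF
  obtain ⟨hzQ', hzmax⟩ := hzF
  have hyle : l y ≤ l z := hzmax y hyQ
  have hble : l b ≤ l z := hzmax b hbQ
  have hlz : l z = (1 - ε) * l y + ε * l b := by
    rw [hzdef, map_add, map_smul, map_smul, smul_eq_mul, smul_eq_mul]
  have hbM : l b = l z := by nlinarith
  have hale : ∀ a ∈ A, l a ≤ l z := fun a ha =>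
    hzmax a (hA ▸ subset_convexHull ℝ (↑A : Set E) ha)
  have hlb : l b = (A.card : ℝ)⁻¹ * ∑ a ∈ A, l a := by
    rw [hbdef, map_smul, map_sum, smul_eq_mul]
  have hsumeq : ∑ a ∈ A, l a = A.card * l z := by
    have h1 := hbM
    rw [hlb] at h1
    have h2 : ∑ a ∈ A, l a = (A.card:ℝ) * ((A.card:ℝ)⁻¹ * ∑ a ∈ A, l a) := by
      rw [← mul_assoc, mul_inv_cancel₀ hcard.ne', one_mul]
    rw [h1] at h2
    linarith [h1]
  have haM : ∀ a ∈ A, l a = l z := by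
    intro a ha
    by_contra hne
    have hsum : ∑ a' ∈ A, l a' < ∑ a' ∈ A, l z :=
      Finset.sum_lt_sum hale ⟨a, ha, lt_of_le_of_ne (hale a ha) hne⟩
    rw [Finset.sum_const, nsmul_eq_mul] at hsum
    linarith [hsumeq]
  have hconst : ∀ p ∈ Q, l p = l z := by
    intro p hp
    have hQsub : Q ⊆ {x | l x = l z} := by
      rw [hA]
      exact convexHull_min haM
        (convex_hyperplane ⟨fun a b => map_add l a b, fun r a => map_smul l r a⟩ (l z))
    exact hQsub hp
  rw [hl]
  ext x
  simp only [Set.mem_setOf_eq]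
  exact ⟨fun h => h.1, fun hx => ⟨hx, fun p hp => by rw [hconst p hp, hconst x hx]⟩⟩

set_option maxHeartbeats 1000000 in
/-- Aux: main geometric lemma. -/
lemma aux_main {E : Type*} [NormedAddCommGroup E] [NormedSpace ℝ E] {Q : Set E}
    (hQconv : Convex ℝ Q) (hQclosed : IsClosed Q) {v y c : E}
    (hyQ : y ∈ Q) (hvy : v ≠ y) (hc : c ∈ interior Q) {δ : ℝ} (hδ : 0 < δ)
    (key : ∀ z ∈ frontier Q, dist z y < δ → ∀ q ∈ Q, q ∈ segment ℝ v z → q = z) :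
    ∃ t : ℝ, 0 < t ∧ y + t • (y - v) ∈ interior Q := by
  by_contra hcon
  push_neg at hcon
  have hyseg : ∀ t : ℝ, 0 < t → y ∈ segment ℝ v (y + t • (y - v)) := by
    intro t ht
    have h1t : (0:ℝ) < 1 + t := by linarith
    exact ⟨t/(1+t), 1/(1+t), by positivity, by positivity, by field_simp; ring,
      by match_scalars <;> field_simp <;> ring⟩
  have hnotQ : ∀ t : ℝ, 0 < t → t * ‖y - v‖ < δ → y + t • (y - v) ∉ Q := by
    intro t ht htδ hwQ
    have hfr : y + t • (y - v) ∈ frontier Q := ⟨subset_closure hwQ, hcon t ht⟩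
    have hd : dist (y + t • (y - v)) y < δ := by
      rw [dist_eq_norm]
      simpa [norm_smul, Real.norm_eq_abs, abs_of_pos ht, mul_comm] using htδ
    have heq := key _ hfr hd y hyQ (hyseg t ht)
    have h0 : t • (y - v) = 0 := by
      rw [left_eq_add] at heq
      exact heq
    rcases smul_eq_zero.mp h0 with h | h
    · exact ht.ne' h
    · exact hvy (sub_eq_zero.mp h).symm
  obtain ⟨rc, hrc, hrcball⟩ := Metric.isOpen_iff.mp isOpen_interior c hc
  set s0 : ℝ := min (1/2) (δ / (2 * (‖c - y‖ + 1))) with hs0def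
  have hcy1 : (0:ℝ) < ‖c - y‖ + 1 := by positivity
  have hs0pos : 0 < s0 := lt_min (by norm_num) (by positivity)
  have hs0lt1 : s0 < 1 := lt_of_le_of_lt (min_le_left _ _) (by norm_num)
  have hs0δ : s0 * ‖c - y‖ < δ / 2 := by
    have h1 : s0 ≤ δ / (2 * (‖c - y‖ + 1)) := min_le_right _ _
    have h2 : δ / (2 * (‖c - y‖ + 1)) * (‖c - y‖ + 1) = δ / 2 := by
      field_simp
    nlinarith [norm_nonneg (c - y)]
  clear_value s0
  set m : E := s0 • c + (1 - s0) • y with hmdef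
  have hm : m ∈ interior Q :=
    hQconv.combo_interior_closure_mem_interior hc (subset_closure hyQ) hs0pos
      (by linarith) (by ring)
  obtain ⟨ρ, hρ, hρball⟩ := Metric.isOpen_iff.mp isOpen_interior m hm
  set ε : ℝ := min (δ/2) (min ρ rc) with hεdef
  have hεpos : 0 < ε := lt_min (by linarith) (lt_min hρ hrc)
  set D : ℝ := ‖y - v‖ + ‖v - c‖ + 1 with hDdef
  have hD : 0 < D := by positivity
  set t : ℝ := ε / D with htdef
  have ht : 0 < t := by positivity
  have htD : t * D = ε := div_mul_cancel₀ _ hD.ne'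
  have htv : t * ‖y - v‖ < ε := by
    have h1 : t * ‖y - v‖ < t * D := by
      apply mul_lt_mul_of_pos_left _ ht
      have := norm_nonneg (v - c)
      simp only [hDdef]; linarith
    linarith [htD]
  have htc : t * ‖v - c‖ < ε := by
    have h1 : t * ‖v - c‖ < t * D := by
      apply mul_lt_mul_of_pos_left _ ht
      have := norm_nonneg (y - v)
      simp only [hDdef]; linarith
    linarith [htD]
  have hεδ2 : ε ≤ δ/2 := min_le_left _ _
  have hερ : ε ≤ ρ := le_trans (min_le_right _ _) (min_le_left _ _)
  have hεrc : ε ≤ rc := le_trans (min_le_right _ _) (min_le_right _ _)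
  have htδ2 : t * ‖y - v‖ < δ/2 := lt_of_lt_of_le htv hεδ2
  clear_value t ε D
  set w : E := y + t • (y - v) with hwdef
  have hwQ : w ∉ Q := hnotQ t ht (by linarith)
  have hwy : ‖w - y‖ = t * ‖y - v‖ := by
    have h1 : w - y = t • (y - v) := by rw [hwdef]; abel
    rw [h1, norm_smul, Real.norm_eq_abs, abs_of_pos ht]
  have hs0Q : (1 - s0) • w + s0 • c ∈ Q := by
    have hfs0 : ((1 - s0) • w + s0 • c) - m = (1 - s0) • (w - y) := by
      rw [hmdef, hwdef]; module
    have hd : dist ((1 - s0) • w + s0 • c) m < ρ := by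
      rw [dist_eq_norm, hfs0, norm_smul, Real.norm_eq_abs, abs_of_nonneg (by linarith)]
      have h1 : ‖w - y‖ < ρ := by rw [hwy]; exact lt_of_lt_of_le htv hερ
      nlinarith [norm_nonneg (w - y)]
    exact interior_subset (hρball (Metric.mem_ball.mpr hd))
  clear_value w m
  obtain ⟨s1, hs1pos, hs1le, hzfr⟩ := aux_crossing hQclosed hwQ hs0pos hs0Q
  set z : E := (1 - s1) • w + s1 • c with hzdef
  have hs1lt1 : s1 < 1 := lt_of_le_of_lt hs1le hs0lt1
  have hznotint : z ∉ interior Q := hzfr.2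
  have hdzy : dist z y < δ := by
    rw [dist_eq_norm]
    have h1 : z - y = (1 - s1) • (w - y) + s1 • (c - y) := by
      rw [hzdef, hwdef]; module
    rw [h1]
    have h2 : ‖(1 - s1) • (w - y) + s1 • (c - y)‖
        ≤ (1 - s1) * ‖w - y‖ + s1 * ‖c - y‖ := by
      calc ‖(1 - s1) • (w - y) + s1 • (c - y)‖
          ≤ ‖(1 - s1) • (w - y)‖ + ‖s1 • (c - y)‖ := norm_add_le _ _
        _ = (1 - s1) * ‖w - y‖ + s1 * ‖c - y‖ := by
            rw [norm_smul, norm_smul, Real.norm_eq_abs, Real.norm_eq_abs,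
              abs_of_nonneg (by linarith), abs_of_nonneg hs1pos.le]
    have h3 : (1 - s1) * ‖w - y‖ ≤ ‖w - y‖ := by
      nlinarith [norm_nonneg (w - y)]
    have h4 : s1 * ‖c - y‖ ≤ s0 * ‖c - y‖ := by
      nlinarith [norm_nonneg (c - y)]
    have h5 : ‖w - y‖ < δ/2 := by rw [hwy]; exact htδ2
    linarith
  have h1t : (0:ℝ) < 1 + t := by linarith
  set mt : E := (t/(1+t)) • v + (1/(1+t)) • c with hmtdef
  have hmt : mt ∈ interior Q := by
    apply hrcball
    rw [Metric.mem_ball, dist_eq_norm]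
    have h1 : mt - c = (t/(1+t)) • (v - c) := by
      rw [hmtdef]
      match_scalars <;> field_simp <;> ring
    rw [h1, norm_smul, Real.norm_eq_abs, abs_of_pos (by positivity)]
    have h2 : t/(1+t) ≤ t := by
      rw [div_le_iff₀ h1t]
      nlinarith [mul_pos ht ht]
    have h3 : t/(1+t) * ‖v - c‖ ≤ t * ‖v - c‖ :=
      mul_le_mul_of_nonneg_right h2 (norm_nonneg _)
    linarith [lt_of_lt_of_le htc hεrc]
  set q : E := s1 • mt + (1 - s1) • y with hqdef
  have hqint : q ∈ interior Q :=
    hQconv.combo_interior_closure_mem_interior hmt (subset_closure hyQ) hs1pos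
      (by linarith) (by ring)
  have hqseg : q ∈ segment ℝ v z := by
    refine ⟨t/(1+t), 1/(1+t), by positivity, by positivity, by field_simp; ring, ?_⟩
    rw [hqdef, hzdef, hmtdef, hwdef]
    match_scalars <;> (field_simp; try ring)
  have hfinal := key z hzfr hdzy q (interior_subset hqint) hqseg
  exact hznotint (hfinal ▸ hqint)
/-- if `y` is a boundary point of a polytope `Q` lying in the relative
interior (within `∂Q`) of the union of the facets visible from `v ∉ Q`, then the line
through `v` and `y` enters the interior of `Q` just beyond `y`: there is `w ∈ Q` with
`y` strictly between `v` and `w` and `(y, w) ⊆ int Q`. -/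
theorem segment_through_visible_point_enters_interior {n : ℕ} (Q : Set (Euc n))
    (hQ : IsPolytope Q) (v : Euc n) (hv : v ∉ Q) (y : Euc n) (hy : y ∈ frontier Q)
    (hvis : ∃ U ∈ nhds y,
      U ∩ frontier Q ⊆ ⋃₀ {F | IsFacetOf Q F ∧ VisibleFrom Q v F}) :
    ∃ w ∈ Q, y ∈ openSegment ℝ v w ∧ openSegment ℝ y w ⊆ interior Q := by
  classical
  obtain ⟨A, hA⟩ := hQ
  have hQconv : Convex ℝ Q := hA ▸ convex_convexHull ℝ _
  have hQclosed : IsClosed Q := hA ▸ (A.finite_toSet.isCompact_convexHull (𝕜 := ℝ)).isClosed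
  obtain ⟨U, hU, hUvis⟩ := hvis
  obtain ⟨δ, hδ, hball⟩ := Metric.mem_nhds_iff.mp hU
  have hyQ : y ∈ Q := by
    have h1 := frontier_subset_closure hy
    rwa [hQclosed.closure_eq] at h1
  have hvy : v ≠ y := fun h => hv (h ▸ hyQ)
  have key : ∀ z ∈ frontier Q, dist z y < δ → ∀ q ∈ Q, q ∈ segment ℝ v z → q = z := by
    intro z hz hdz q hqQ hqseg
    have hzU : z ∈ U := hball (Metric.mem_ball.mpr hdz)
    obtain ⟨F, hFmem, hzF⟩ := Set.mem_sUnion.mp (hUvis ⟨hzU, hz⟩)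
    have h1 := hFmem.2 z hzF
    have h2 : q ∈ ({z} : Set (Euc n)) := h1 ▸ (⟨hqseg, hqQ⟩ : q ∈ segment ℝ v z ∩ Q)
    exact h2
  by_cases hint : (interior Q).Nonempty
  · obtain ⟨c, hc⟩ := hint
    obtain ⟨t, ht, hwint⟩ := aux_main hQconv hQclosed hyQ hvy hc hδ key
    have h1t : (0:ℝ) < 1 + t := by linarith
    refine ⟨y + t • (y - v), interior_subset hwint, ?_, ?_⟩
    · exact ⟨t/(1+t), 1/(1+t), by positivity, by positivity, by field_simp; ring,
        by match_scalars <;> field_simp <;> ring⟩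
    · intro p hp
      rw [openSegment_symm] at hp
      exact hQconv.openSegment_interior_closure_subset_interior hwint
        (subset_closure hyQ) hp
  · exfalso
    have hintQ : interior Q = ∅ := Set.not_nonempty_iff_eq_empty.mp hint
    have hfrQ : frontier Q = Q := by
      rw [frontier, hintQ, hQclosed.closure_eq, Set.diff_empty]
    have hAne : A.Nonempty := by
      by_contra h
      rw [Finset.not_nonempty_iff_eq_empty] at h
      rw [h] at hA
      simp only [Finset.coe_empty, convexHull_empty] at hA
      rw [hA] at hyQ
      exact hyQ
    have hcard : (0:ℝ) < A.card := by exact_mod_cast hAne.card_pos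
    set b : Euc n := (A.card : ℝ)⁻¹ • ∑ a ∈ A, a with hbdef
    have hbQ : b ∈ Q := by
      rw [hA]
      have h1 := A.centerMass_mem_convexHull (w := fun _ => (1:ℝ))
        (fun _ _ => zero_le_one) (by simpa using hcard)
        (z := id) (fun a ha => Finset.mem_coe.mpr ha)
      simpa [Finset.centerMass, hbdef] using h1
    set ε : ℝ := min (1/2) (δ / (2 * (‖b - y‖ + 1))) with hεdef
    have hby1 : (0:ℝ) < ‖b - y‖ + 1 := by positivity
    have hεpos : 0 < ε := lt_min (by norm_num) (by positivity)
    have hεlt1 : ε < 1 := lt_of_le_of_lt (min_le_left _ _) (by norm_num)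
    have hεδ : ε * ‖b - y‖ < δ := by
      have h1 : ε ≤ δ / (2 * (‖b - y‖ + 1)) := min_le_right _ _
      have h2 : δ / (2 * (‖b - y‖ + 1)) * (‖b - y‖ + 1) = δ / 2 := by
        field_simp
      nlinarith [norm_nonneg (b - y)]
    clear_value ε
    set z : Euc n := (1 - ε) • y + ε • b with hzdef
    have hzQ : z ∈ Q := hQconv hyQ hbQ (by linarith) hεpos.le (by ring)
    have hzU : z ∈ U := by
      apply hball
      rw [Metric.mem_ball, dist_eq_norm]
      have h1 : z - y = ε • (b - y) := by rw [hzdef]; module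
      rw [h1, norm_smul, Real.norm_eq_abs, abs_of_pos hεpos]
      exact hεδ
    have hzfr : z ∈ frontier Q := by rw [hfrQ]; exact hzQ
    obtain ⟨F, hFmem, hzF⟩ := Set.mem_sUnion.mp (hUvis ⟨hzU, hzfr⟩)
    obtain ⟨⟨hFexp, hFne, hFdim⟩, hFvis⟩ := hFmem
    have hFQ : F = Q :=
      aux_exposed_full hA hAne hFexp hFne hyQ hεpos hεlt1 hzF
    rw [hFQ] at hFdim
    omega
end
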